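/- arXiv:2508.07787 — 2 statements merged into one kernel-verified Lean document; each statement's English description precedes it below -/
import Mathlib

section
/- Refined Sobolev embedding with logarithmic loss: for every s > 1/2 there exists a constant C_s > 0, depending only on s, such that every nonzero u ∈ H^s(ℝ) satisfies ‖u‖_{L^∞} ≤ C_s ‖u‖_{H^{1/2}} · [log(2 + ‖u‖_{H^s}/‖u‖_{H^{1/2}})]^{1/2}, where ‖u‖_{L^∞} is the supremum norm of the continuous representative of u (which exists since H^s(ℝ) embeds in the bounded continuous functions for s > 1/2). -/
open MeasureTheory Filter
open scoped Topology FourierTransform ENNReal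

noncomputable section

/-- `v` is the (Plancherel / distributional) Fourier transform of the `L²` function `u`:
both are square integrable and the duality `∫ u ⋅ 𝓕g = ∫ v ⋅ g` holds against every
Schwartz test function. -/
def HasFT (u v : ℝ → ℂ) : Prop :=
  MemLp u 2 (volume : Measure ℝ) ∧ MemLp v 2 (volume : Measure ℝ) ∧
    ∀ g : SchwartzMap ℝ ℂ, ∫ x : ℝ, u x * 𝓕 (⇑g) x = ∫ ξ : ℝ, v ξ * g ξ

/-- Squared inhomogeneous Sobolev norm `‖u‖_{H^s}²`, computed from the Fourier transform
`v` of `u`. -/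
def sobSq (s : ℝ) (v : ℝ → ℂ) : ℝ≥0∞ :=
  ∫⁻ ξ : ℝ, ENNReal.ofReal ((1 + ξ ^ 2) ^ s * ‖v ξ‖ ^ 2)

/-- Squared homogeneous Sobolev norm `‖u‖_{Ḣ^s}²`, computed from the Fourier transform
`v` of `u`. -/
def homSq (s : ℝ) (v : ℝ → ℂ) : ℝ≥0∞ :=
  ∫⁻ ξ : ℝ, ENNReal.ofReal (|ξ| ^ (2 * s) * ‖v ξ‖ ^ 2)

namespace RSAux

open Set
open scoped SchwartzMap RealInnerProductSpace

/-- Schwartz map from a smooth compactly supported real function. -/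
def toSchwartzC (g : ℝ → ℝ) (hg : ContDiff ℝ (⊤ : ℕ∞) g) (hsupp : HasCompactSupport g) :
    𝓢(ℝ, ℂ) where
  toFun x := (g x : ℂ)
  smooth' := Complex.ofRealCLM.contDiff.comp hg
  decay' k n := by
    have hsm : ContDiff ℝ (⊤ : ℕ∞) fun x : ℝ => (g x : ℂ) := Complex.ofRealCLM.contDiff.comp hg
    have hcs : HasCompactSupport fun x : ℝ => (g x : ℂ) :=
      hsupp.comp_left (g := fun r : ℝ => (r : ℂ)) (by simp)
    have h2 : HasCompactSupport (iteratedFDeriv ℝ n fun x : ℝ => (g x : ℂ)) :=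
      hcs.iteratedFDeriv n
    have hc : Continuous (iteratedFDeriv ℝ n fun x : ℝ => (g x : ℂ)) :=
      hsm.continuous_iteratedFDeriv (by exact_mod_cast le_top)
    have h3 : HasCompactSupport fun x : ℝ =>
        ‖x‖ ^ k * ‖iteratedFDeriv ℝ n (fun x : ℝ => (g x : ℂ)) x‖ :=
      HasCompactSupport.mul_left h2.norm
    obtain ⟨C, hC⟩ :=
      ((continuous_norm.pow k).mul hc.norm).bounded_above_of_compact_support h3
    exact ⟨C, fun x => (Real.le_norm_self _).trans (hC x)⟩

@[simp] lemma toSchwartzC_apply (g : ℝ → ℝ) (hg : ContDiff ℝ (⊤ : ℕ∞) g)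
    (hs : HasCompactSupport g) (x : ℝ) : toSchwartzC g hg hs x = (g x : ℂ) := rfl

lemma neg_innerL_flip : (-innerₗ ℝ).flip = -innerₗ ℝ := by
  ext x y
  simp [real_inner_comm]

lemma continuous_neg_innerL : Continuous fun p : ℝ × ℝ => (-innerₗ ℝ) p.1 p.2 := by
  have : Continuous fun p : ℝ × ℝ => -(⟪p.1, p.2⟫ : ℝ) := continuous_inner.neg
  simpa using this

/-- Multiplication formula for the inverse Fourier transform. -/
lemma mult_inv {f g : ℝ → ℂ} (hf : Integrable f) (hg : Integrable g) :
    ∫ ξ, (𝓕⁻ f) ξ * g ξ = ∫ x, f x * (𝓕⁻ g) x := by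
  have := VectorFourier.integral_fourierIntegral_smul_eq_flip (e := Real.fourierChar)
    (L := -innerₗ ℝ) (μ := volume) (ν := volume)
    Real.continuous_fourierChar continuous_neg_innerL hf hg
  rw [neg_innerL_flip] at this
  simpa [smul_eq_mul, FourierTransformInv.fourierInv] using this

lemma continuous_inv_ft {f : ℝ → ℂ} (hf : Integrable f) : Continuous (𝓕⁻ f) :=
  VectorFourier.fourierIntegral_continuous Real.continuous_fourierChar continuous_neg_innerL hf

/-- The inverse Fourier transform of `Fu` is an a.e. representative of `u`. -/
lemma rep_ae_eq {u Fu : ℝ → ℂ} (h : HasFT u Fu) (hint : Integrable Fu) :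
    𝓕⁻ Fu =ᵐ[(volume : Measure ℝ)] u := by
  have key : ∀ h' : 𝓢(ℝ, ℂ), ∫ x, u x * h' x = ∫ x, (𝓕⁻ Fu) x * h' x := by
    intro h'
    set G : 𝓢(ℝ, ℂ) := (SchwartzMap.fourierTransformCLE ℂ 𝓢(ℝ, ℂ)).symm h' with hG
    have hFG : 𝓕 (⇑G) = ⇑h' := by
      rw [← SchwartzMap.fourier_coe]
      exact congrArg _ (FourierTransform.fourier_fourierInv_eq h')
    have hFGint : Integrable (𝓕 (⇑G)) := by
      rw [hFG]; exact h'.integrable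
    have h1 : ∫ x, u x * h' x = ∫ ξ, Fu ξ * G ξ := by
      rw [← hFG]; exact h.2.2 G
    have h2 : ∫ x, (𝓕⁻ Fu) x * h' x = ∫ ξ, Fu ξ * G ξ := by
      rw [← hFG, mult_inv hint hFGint]
      congr 1
      ext ξ
      congr 1
      have : 𝓕⁻ (𝓕 ⇑G) = ⇑G := G.continuous.fourierInv_fourier_eq G.integrable hFGint
      rw [this]
    rw [h1, h2]
  have hu_loc : LocallyIntegrable u (volume : Measure ℝ) :=
    h.1.locallyIntegrable one_le_two
  have hv_loc : LocallyIntegrable (𝓕⁻ Fu) (volume : Measure ℝ) :=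
    (continuous_inv_ft hint).locallyIntegrable
  have := ae_eq_of_integral_contDiff_smul_eq hv_loc hu_loc (fun g hg hgsupp => ?_)
  · exact this
  · have h1 : ∫ x, g x • (𝓕⁻ Fu) x = ∫ x, (𝓕⁻ Fu) x * (toSchwartzC g hg hgsupp) x := by
      congr 1; ext x
      simp [toSchwartzC_apply, Complex.real_smul, mul_comm]
    have h2 : ∫ x, g x • u x = ∫ x, u x * (toSchwartzC g hg hgsupp) x := by
      congr 1; ext x
      simp [toSchwartzC_apply, Complex.real_smul, mul_comm]
    rw [h1, h2, key]

lemma one_add_sq_pos (ξ : ℝ) : (0:ℝ) < 1 + ξ ^ 2 := by positivity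

lemma sobSq_eq (t : ℝ) (v : ℝ → ℂ) :
    sobSq t v = ∫⁻ ξ : ℝ, ENNReal.ofReal ((1 + ξ ^ 2) ^ t) * (‖v ξ‖₊ : ℝ≥0∞) ^ 2 := by
  unfold sobSq
  congr 1; ext ξ
  rw [ENNReal.ofReal_mul (by positivity)]
  rw [ENNReal.ofReal_pow (norm_nonneg _), ofReal_norm]; rfl

/-- Cauchy–Schwarz splitting against the Sobolev weight on a set. -/
lemma setCS {Fu : ℝ → ℂ} (hm : AEStronglyMeasurable Fu (volume : Measure ℝ)) (t : ℝ) (S : Set ℝ) :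
    ∫⁻ ξ in S, (‖Fu ξ‖₊ : ℝ≥0∞) ≤
      (∫⁻ ξ in S, ENNReal.ofReal ((1 + ξ ^ 2) ^ (-t))) ^ (1/2 : ℝ) * (sobSq t Fu) ^ (1/2 : ℝ) := by
  set w : ℝ → ℝ≥0∞ := fun ξ => ENNReal.ofReal ((1 + ξ ^ 2) ^ t) with hw
  have hw0 : ∀ ξ, w ξ ≠ 0 := fun ξ => by
    simp [hw, ENNReal.ofReal_eq_zero, not_le, Real.rpow_pos_of_pos (one_add_sq_pos ξ)]
  have hwt : ∀ ξ, w ξ ≠ ⊤ := fun ξ => ENNReal.ofReal_ne_top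
  have hwm : Measurable w := by
    apply Measurable.ennreal_ofReal
    exact (continuous_const.add (continuous_pow 2)).rpow_const
      (fun x => Or.inl (one_add_sq_pos x).ne') |>.measurable
  have hFum : AEMeasurable (fun ξ => (‖Fu ξ‖₊ : ℝ≥0∞)) (volume.restrict S) :=
    hm.enorm.restrict
  have key : ∀ ξ, (‖Fu ξ‖₊ : ℝ≥0∞) =
      (w ξ ^ (-(1/2 : ℝ))) * (w ξ ^ ((1/2:ℝ)) * (‖Fu ξ‖₊ : ℝ≥0∞)) := by
    intro ξ
    rw [← mul_assoc, ← ENNReal.rpow_add _ _ (hw0 ξ) (hwt ξ)]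
    norm_num
  have fac1 : ∫⁻ ξ in S, (w ξ ^ (-(1/2 : ℝ))) ^ (2:ℝ)
      = ∫⁻ ξ in S, ENNReal.ofReal ((1 + ξ ^ 2) ^ (-t)) := by
    apply lintegral_congr
    intro ξ
    rw [← ENNReal.rpow_mul, hw]
    norm_num
    rw [ENNReal.ofReal_rpow_of_pos (Real.rpow_pos_of_pos (one_add_sq_pos ξ) t),
      ← Real.rpow_mul (one_add_sq_pos ξ).le]
    norm_num
  have fac2 : ∫⁻ ξ in S, (w ξ ^ ((1/2:ℝ)) * (‖Fu ξ‖₊ : ℝ≥0∞)) ^ (2:ℝ) ≤ sobSq t Fu := by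
    have : ∀ ξ, (w ξ ^ ((1/2:ℝ)) * (‖Fu ξ‖₊ : ℝ≥0∞)) ^ (2:ℝ)
        = w ξ * (‖Fu ξ‖₊ : ℝ≥0∞) ^ 2 := by
      intro ξ
      rw [ENNReal.mul_rpow_of_nonneg _ _ (by norm_num), ← ENNReal.rpow_mul]
      norm_num
    rw [lintegral_congr this, sobSq_eq]
    exact setLIntegral_le_lintegral _ _
  calc ∫⁻ ξ in S, (‖Fu ξ‖₊ : ℝ≥0∞)
      = ∫⁻ ξ in S, (w ξ ^ (-(1/2 : ℝ))) * (w ξ ^ ((1/2:ℝ)) * (‖Fu ξ‖₊ : ℝ≥0∞)) :=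
        lintegral_congr fun ξ => key ξ
    _ ≤ (∫⁻ ξ in S, (w ξ ^ (-(1/2 : ℝ))) ^ (2:ℝ)) ^ (1/2 : ℝ) *
        (∫⁻ ξ in S, (w ξ ^ ((1/2:ℝ)) * (‖Fu ξ‖₊ : ℝ≥0∞)) ^ (2:ℝ)) ^ (1/2 : ℝ) :=
        ENNReal.lintegral_mul_le_Lp_mul_Lq (volume.restrict S)
          Real.HolderConjugate.two_two
          ((hwm.pow_const _).aemeasurable) ((hwm.pow_const _).aemeasurable.mul hFum)
    _ ≤ (∫⁻ ξ in S, ENNReal.ofReal ((1 + ξ ^ 2) ^ (-t))) ^ (1/2 : ℝ) *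
          (sobSq t Fu) ^ (1/2 : ℝ) := by
        rw [fac1]
        gcongr

lemma lint_inv_Icc {a b : ℝ} (ha : 1 ≤ a) (hab : a ≤ b) :
    ∫⁻ x in Icc a b, ENNReal.ofReal x⁻¹ = ENNReal.ofReal (Real.log (b / a)) := by
  have hinte : IntegrableOn (fun x : ℝ => x⁻¹) (Icc a b) := by
    apply ContinuousOn.integrableOn_Icc
    exact continuousOn_inv₀.mono (fun x hx => by
      have : (1:ℝ) ≤ x := le_trans ha hx.1
      exact ne_of_gt (lt_of_lt_of_le zero_lt_one this))
  rw [← ofReal_integral_eq_lintegral_ofReal hinte]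
  · congr 1
    rw [integral_Icc_eq_integral_Ioc, ← intervalIntegral.integral_of_le hab,
      integral_inv (by
        intro hmem
        rcases hmem with ⟨h1, h2⟩
        rw [min_eq_left hab] at h1
        linarith)]
  · filter_upwards [ae_restrict_mem measurableSet_Icc] with x hx
    have : (0:ℝ) < x := lt_of_lt_of_le zero_lt_one (le_trans ha hx.1)
    positivity

/-- Low-frequency weight integral bound. -/
lemma low_bound {R : ℝ} (hR : 1 ≤ R) :
    ∫⁻ ξ in Icc (-R) R, ENNReal.ofReal ((1 + ξ ^ 2) ^ (-(1/2 : ℝ))) ≤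
      ENNReal.ofReal (2 + 2 * Real.log R) := by
  have hsub : Icc (-R) R ⊆ Icc (-R) (-1) ∪ (Icc (-1) 1 ∪ Icc 1 R) := by
    intro x hx
    rcases le_total x (-1) with h | h
    · exact Or.inl ⟨hx.1, h⟩
    rcases le_total x 1 with h' | h'
    · exact Or.inr (Or.inl ⟨h, h'⟩)
    · exact Or.inr (Or.inr ⟨h', hx.2⟩)
  calc ∫⁻ ξ in Icc (-R) R, ENNReal.ofReal ((1 + ξ ^ 2) ^ (-(1/2 : ℝ)))
      ≤ ∫⁻ ξ in Icc (-R) (-1) ∪ (Icc (-1) 1 ∪ Icc 1 R),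
          ENNReal.ofReal ((1 + ξ ^ 2) ^ (-(1/2 : ℝ))) := lintegral_mono_set hsub
    _ ≤ (∫⁻ ξ in Icc (-R) (-1), ENNReal.ofReal ((1 + ξ ^ 2) ^ (-(1/2 : ℝ)))) +
        ((∫⁻ ξ in Icc (-1) 1, ENNReal.ofReal ((1 + ξ ^ 2) ^ (-(1/2 : ℝ)))) +
         (∫⁻ ξ in Icc 1 R, ENNReal.ofReal ((1 + ξ ^ 2) ^ (-(1/2 : ℝ))))) :=
        le_trans (lintegral_union_le _ _ _) (by gcongr; exact lintegral_union_le _ _ _)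
    _ ≤ ENNReal.ofReal (Real.log R) + (2 + ENNReal.ofReal (Real.log R)) := by
        gcongr
        · have hpt : ∀ ξ ∈ Icc (-R) (-1), ENNReal.ofReal ((1 + ξ ^ 2) ^ (-(1/2 : ℝ)))
              ≤ ENNReal.ofReal (-ξ)⁻¹ := by
            intro ξ hξ
            apply ENNReal.ofReal_le_ofReal
            have hξ1 : (1:ℝ) ≤ -ξ := by linarith [hξ.2]
            have h0 : (0:ℝ) < -ξ := lt_of_lt_of_le zero_lt_one hξ1
            have h1 : ((-ξ) ^ 2 : ℝ) ≤ 1 + ξ ^ 2 := by nlinarith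
            calc (1 + ξ ^ 2) ^ (-(1/2 : ℝ)) ≤ ((-ξ) ^ 2) ^ (-(1/2 : ℝ)) := by
                  apply Real.rpow_le_rpow_of_nonpos (by positivity) h1 (by norm_num)
              _ = (-ξ)⁻¹ := by
                  rw [← Real.rpow_natCast (-ξ) 2, ← Real.rpow_mul h0.le]
                  norm_num [Real.rpow_neg_one]
          calc ∫⁻ ξ in Icc (-R) (-1), ENNReal.ofReal ((1 + ξ ^ 2) ^ (-(1/2 : ℝ)))
              ≤ ∫⁻ ξ in Icc (-R) (-1), ENNReal.ofReal (-ξ)⁻¹ :=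
                setLIntegral_mono_ae (by fun_prop) (Filter.Eventually.of_forall hpt)
            _ = ∫⁻ x in Icc 1 R, ENNReal.ofReal x⁻¹ := by
                have hpre : (fun x : ℝ => -x) ⁻¹' (Icc 1 R) = Icc (-R) (-1) := by
                  ext x; simp [neg_le, le_neg, and_comm]
                rw [← hpre]
                exact (Measure.measurePreserving_neg volume).setLIntegral_comp_preimage_emb
                  (Homeomorph.neg ℝ).measurableEmbedding (fun x => ENNReal.ofReal x⁻¹) (Icc 1 R)
            _ = ENNReal.ofReal (Real.log R) := by
                rw [lint_inv_Icc le_rfl hR, div_one]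
        · calc ∫⁻ ξ in Icc (-1) 1, ENNReal.ofReal ((1 + ξ ^ 2) ^ (-(1/2 : ℝ)))
              ≤ ∫⁻ _ in Icc (-1:ℝ) 1, 1 := by
                apply setLIntegral_mono_ae (by fun_prop)
                apply Filter.Eventually.of_forall
                intro ξ _
                rw [show (1:ℝ≥0∞) = ENNReal.ofReal 1 by simp]
                apply ENNReal.ofReal_le_ofReal
                apply Real.rpow_le_one_of_one_le_of_nonpos (by nlinarith) (by norm_num)
            _ ≤ 2 := by
                rw [setLIntegral_const]
                simp [Real.volume_Icc]
                norm_num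
        · have hpt : ∀ ξ ∈ Icc (1:ℝ) R, ENNReal.ofReal ((1 + ξ ^ 2) ^ (-(1/2 : ℝ)))
              ≤ ENNReal.ofReal ξ⁻¹ := by
            intro ξ hξ
            apply ENNReal.ofReal_le_ofReal
            have h0 : (0:ℝ) < ξ := lt_of_lt_of_le zero_lt_one hξ.1
            calc (1 + ξ ^ 2) ^ (-(1/2 : ℝ)) ≤ (ξ ^ 2) ^ (-(1/2 : ℝ)) := by
                  apply Real.rpow_le_rpow_of_nonpos (by positivity) (by nlinarith) (by norm_num)
              _ = ξ⁻¹ := by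
                  rw [← Real.rpow_natCast ξ 2, ← Real.rpow_mul h0.le]
                  norm_num [Real.rpow_neg_one]
          calc ∫⁻ ξ in Icc (1:ℝ) R, ENNReal.ofReal ((1 + ξ ^ 2) ^ (-(1/2 : ℝ)))
              ≤ ∫⁻ ξ in Icc (1:ℝ) R, ENNReal.ofReal ξ⁻¹ :=
                setLIntegral_mono_ae (by fun_prop) (Filter.Eventually.of_forall hpt)
            _ = ENNReal.ofReal (Real.log R) := by rw [lint_inv_Icc le_rfl hR, div_one]
    _ ≤ ENNReal.ofReal (2 + 2 * Real.log R) := by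
        have hlog : 0 ≤ Real.log R := Real.log_nonneg hR
        rw [show (2:ℝ≥0∞) = ENNReal.ofReal 2 by norm_num]
        rw [← ENNReal.ofReal_add (by norm_num) hlog, ← ENNReal.ofReal_add hlog (by positivity)]
        apply ENNReal.ofReal_le_ofReal
        linarith

lemma lint_rpow_Ioi {s R : ℝ} (hs : 1/2 < s) (hR : 1 ≤ R) :
    ∫⁻ x in Ioi R, ENNReal.ofReal (x ^ (-(2*s))) = ENNReal.ofReal (R ^ (1-2*s) / (2*s-1)) := by
  have hR0 : (0:ℝ) < R := lt_of_lt_of_le zero_lt_one hR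
  have hexp : -(2*s) < -1 := by linarith
  have hint : IntegrableOn (fun x : ℝ => x ^ (-(2*s))) (Ioi R) :=
    integrableOn_Ioi_rpow_of_lt hexp hR0
  rw [← ofReal_integral_eq_lintegral_ofReal hint]
  · congr 1
    rw [integral_Ioi_rpow_of_lt hexp hR0]
    rw [show -(2*s) + 1 = 1 - 2*s by ring]
    rw [show (2*s - 1 : ℝ) = -(1 - 2*s) by ring]
    rw [div_neg, neg_div]
  · filter_upwards [ae_restrict_mem measurableSet_Ioi] with x hx
    exact Real.rpow_nonneg (le_of_lt (lt_trans hR0 hx)) _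

lemma high_pt {s : ℝ} (hs : 1/2 < s) {y ξ : ℝ} (hy : 1 ≤ y) (hyξ : y ^ 2 ≤ 1 + ξ ^ 2) :
    (1 + ξ ^ 2) ^ (-s) ≤ y ^ (-(2*s)) := by
  have hy0 : (0:ℝ) < y := lt_of_lt_of_le zero_lt_one hy
  calc (1 + ξ ^ 2) ^ (-s) ≤ (y ^ 2) ^ (-s) :=
        Real.rpow_le_rpow_of_nonpos (by positivity) hyξ (by linarith)
    _ = y ^ (-(2*s)) := by
        rw [← Real.rpow_natCast y 2, ← Real.rpow_mul hy0.le]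
        norm_num

/-- High-frequency weight integral bound. -/
lemma high_bound {s R : ℝ} (hs : 1/2 < s) (hR : 1 ≤ R) :
    ∫⁻ ξ in (Icc (-R) R)ᶜ, ENNReal.ofReal ((1 + ξ ^ 2) ^ (-s)) ≤
      ENNReal.ofReal (2 * R ^ (1-2*s) / (2*s-1)) := by
  have hR0 : (0:ℝ) < R := lt_of_lt_of_le zero_lt_one hR
  have hquot : (0:ℝ) ≤ R ^ (1-2*s) / (2*s-1) :=
    div_nonneg (Real.rpow_nonneg hR0.le _) (by linarith)
  have hsub : (Icc (-R) R)ᶜ ⊆ Iio (-R) ∪ Ioi R := by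
    intro x hx
    rcases lt_or_ge x (-R) with h | h
    · exact Or.inl h
    rcases le_or_gt x R with h' | h'
    · exact absurd ⟨h, h'⟩ hx
    · exact Or.inr h'
  refine le_trans (lintegral_mono_set hsub) (le_trans (lintegral_union_le _ _ _) ?_)
  have hIoi : ∫⁻ ξ in Ioi R, ENNReal.ofReal ((1 + ξ ^ 2) ^ (-s)) ≤
      ENNReal.ofReal (R ^ (1-2*s) / (2*s-1)) := by
    rw [← lint_rpow_Ioi hs hR]
    apply setLIntegral_mono_ae (by fun_prop)
    refine Filter.Eventually.of_forall (fun ξ hξ => ?_)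
    exact ENNReal.ofReal_le_ofReal (high_pt hs (le_trans hR (le_of_lt hξ))
      (by nlinarith [le_of_lt (mem_Ioi.mp hξ)]))
  have hIio : ∫⁻ ξ in Iio (-R), ENNReal.ofReal ((1 + ξ ^ 2) ^ (-s)) ≤
      ENNReal.ofReal (R ^ (1-2*s) / (2*s-1)) := by
    have hpre : (fun x : ℝ => -x) ⁻¹' (Ioi R) = Iio (-R) := by
      ext x; simp [lt_neg]
    have hchg : ∫⁻ ξ in Iio (-R), ENNReal.ofReal ((-ξ) ^ (-(2*s))) =
        ∫⁻ x in Ioi R, ENNReal.ofReal (x ^ (-(2*s))) := by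
      rw [← hpre]
      exact (Measure.measurePreserving_neg volume).setLIntegral_comp_preimage_emb
        (Homeomorph.neg ℝ).measurableEmbedding (fun x => ENNReal.ofReal (x ^ (-(2*s)))) (Ioi R)
    rw [← lint_rpow_Ioi hs hR, ← hchg]
    apply setLIntegral_mono_ae (by fun_prop)
    refine Filter.Eventually.of_forall (fun ξ hξ => ?_)
    have h1 : (1:ℝ) ≤ -ξ := by
      have := mem_Iio.mp hξ; linarith
    exact ENNReal.ofReal_le_ofReal (high_pt hs h1 (by nlinarith))
  calc (∫⁻ ξ in Iio (-R), ENNReal.ofReal ((1 + ξ ^ 2) ^ (-s))) +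
        ∫⁻ ξ in Ioi R, ENNReal.ofReal ((1 + ξ ^ 2) ^ (-s))
      ≤ ENNReal.ofReal (R ^ (1-2*s) / (2*s-1)) + ENNReal.ofReal (R ^ (1-2*s) / (2*s-1)) := by
        gcongr
    _ = ENNReal.ofReal (2 * R ^ (1-2*s) / (2*s-1)) := by
        rw [← ENNReal.ofReal_add hquot hquot]
        congr 1
        ring

lemma norm_inv_ft_le (f : ℝ → ℂ) (x : ℝ) : ‖(𝓕⁻ f) x‖ ≤ ∫ ξ : ℝ, ‖f ξ‖ :=
  VectorFourier.norm_fourierIntegral_le_integral_norm Real.fourierChar volume (-innerₗ ℝ) f x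

lemma conv_rpow_half {x : ℝ≥0∞} (hx : x ≠ ⊤) :
    x ^ (1/2:ℝ) = ENNReal.ofReal (Real.sqrt x.toReal) := by
  conv_lhs => rw [← ENNReal.ofReal_toReal hx]
  rw [ENNReal.ofReal_rpow_of_nonneg ENNReal.toReal_nonneg (by norm_num), Real.sqrt_eq_rpow]

lemma conv_ofReal_half {c : ℝ} (hc : 0 ≤ c) :
    (ENNReal.ofReal c) ^ (1/2:ℝ) = ENNReal.ofReal (Real.sqrt c) := by
  rw [ENNReal.ofReal_rpow_of_nonneg hc (by norm_num), Real.sqrt_eq_rpow]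

end RSAux
set_option maxHeartbeats 1000000 in
/-- **Refined Sobolev embedding with logarithmic loss**: for `s > 1/2` there is `C_s > 0`
such that every nonzero `u ∈ H^s(ℝ)` satisfies
`‖u‖_{L^∞} ≤ C_s ‖u‖_{H^{1/2}} [log(2 + ‖u‖_{H^s}/‖u‖_{H^{1/2}})]^{1/2}`,
the supremum norm being that of the continuous representative of `u`. -/
theorem refined_sobolev_log (s : ℝ) (hs : 1 / 2 < s) :
    ∃ Cs : ℝ, 0 < Cs ∧
      ∀ u Fu : ℝ → ℂ, HasFT u Fu → sobSq s Fu < ⊤ →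
        ¬u =ᵐ[(volume : Measure ℝ)] (0 : ℝ → ℂ) →
        (∃ v : ℝ → ℂ, Continuous v ∧ v =ᵐ[(volume : Measure ℝ)] u) ∧
        ∀ v : ℝ → ℂ, Continuous v → v =ᵐ[(volume : Measure ℝ)] u →
          ∀ x : ℝ, ‖v x‖ ≤
            Cs * Real.sqrt (sobSq (1 / 2) Fu).toReal *
              Real.sqrt (Real.log (2 +
                Real.sqrt (sobSq s Fu).toReal / Real.sqrt (sobSq (1 / 2) Fu).toReal)) := by
  have hs2 : (0:ℝ) < s - 1/2 := by linarith
  set p : ℝ := (s - 1/2)⁻¹ with hp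
  have hp0 : 0 < p := inv_pos.mpr hs2
  have hlog2 : 0 < Real.log 2 := Real.log_pos one_lt_two
  set c1 : ℝ := 2 / Real.log 2 + 2 * p with hc1
  have hc10 : 0 < c1 := add_pos (div_pos two_pos hlog2) (by positivity)
  set c2 : ℝ := 2 / (2 * s - 1) with hc2
  have hc20 : 0 < c2 := div_pos two_pos (by linarith)
  refine ⟨Real.sqrt c1 + Real.sqrt c2 / Real.sqrt (Real.log 2),
    add_pos_of_pos_of_nonneg (Real.sqrt_pos.mpr hc10) (by positivity), ?_⟩
  intro u Fu h hfin hne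
  have hFm : AEStronglyMeasurable Fu (volume : Measure ℝ) := h.2.1.aestronglyMeasurable
  have hab : sobSq (1/2) Fu ≤ sobSq s Fu := by
    apply lintegral_mono
    intro ξ
    apply ENNReal.ofReal_le_ofReal
    apply mul_le_mul_of_nonneg_right _ (by positivity)
    exact Real.rpow_le_rpow_of_exponent_le (by nlinarith) (le_of_lt hs)
  have hane : sobSq (1/2) Fu ≠ ⊤ := (lt_of_le_of_lt hab hfin).ne
  have hbne : sobSq s Fu ≠ ⊤ := hfin.ne
  -- parametric estimate
  have est : ∀ R : ℝ, 1 ≤ R → ∫⁻ ξ, (‖Fu ξ‖₊ : ℝ≥0∞) ≤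
      (ENNReal.ofReal (2 + 2 * Real.log R)) ^ (1/2:ℝ) * (sobSq (1/2) Fu) ^ (1/2:ℝ) +
      (ENNReal.ofReal (2 * R ^ (1 - 2*s) / (2*s - 1))) ^ (1/2:ℝ) * (sobSq s Fu) ^ (1/2:ℝ) := by
    intro R hR
    rw [← lintegral_add_compl (fun ξ => (‖Fu ξ‖₊ : ℝ≥0∞))
      (measurableSet_Icc (a := -R) (b := R))]
    gcongr ?_ + ?_
    · refine le_trans (RSAux.setCS hFm (1/2) _) ?_
      gcongr
      exact RSAux.low_bound hR
    · refine le_trans (RSAux.setCS hFm s _) ?_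
      gcongr
      exact RSAux.high_bound hs hR
  -- integrability of Fu
  have hInt : Integrable Fu := by
    refine ⟨hFm, ?_⟩
    have : ∫⁻ ξ, (‖Fu ξ‖₊ : ℝ≥0∞) < ⊤ := by
      refine lt_of_le_of_lt (est 1 le_rfl) ?_
      apply ENNReal.add_lt_top.mpr
      constructor
      · exact ENNReal.mul_lt_top
          (ENNReal.rpow_lt_top_of_nonneg (by norm_num) ENNReal.ofReal_ne_top)
          (ENNReal.rpow_lt_top_of_nonneg (by norm_num) hane)
      · exact ENNReal.mul_lt_top
          (ENNReal.rpow_lt_top_of_nonneg (by norm_num) ENNReal.ofReal_ne_top)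
          (ENNReal.rpow_lt_top_of_nonneg (by norm_num) hbne)
    exact this
  set v : ℝ → ℂ := 𝓕⁻ Fu with hvdef
  have hvc : Continuous v := RSAux.continuous_inv_ft hInt
  have hvu : v =ᵐ[(volume : Measure ℝ)] u := RSAux.rep_ae_eq h hInt
  -- the H^{1/2} norm is nonzero
  have ha0 : sobSq (1/2) Fu ≠ 0 := by
    intro hzero
    have hmeasInt : AEMeasurable
        (fun ξ : ℝ => ENNReal.ofReal ((1 + ξ ^ 2) ^ ((1:ℝ)/2) * ‖Fu ξ‖ ^ 2))
        (volume : Measure ℝ) := by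
      apply ENNReal.measurable_ofReal.comp_aemeasurable
      apply AEMeasurable.mul
      · exact ((continuous_const.add (continuous_pow 2)).rpow_const
          (fun x => Or.inl (RSAux.one_add_sq_pos x).ne')).measurable.aemeasurable
      · exact hFm.norm.aemeasurable.pow_const 2
    have h0 : (fun ξ : ℝ => ENNReal.ofReal ((1 + ξ ^ 2) ^ ((1:ℝ)/2) * ‖Fu ξ‖ ^ 2))
        =ᵐ[(volume : Measure ℝ)] 0 := by
      apply (lintegral_eq_zero_iff' hmeasInt).mp
      exact hzero
    have hFu0 : Fu =ᵐ[(volume : Measure ℝ)] 0 := by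
      filter_upwards [h0] with ξ hξ
      simp only [Pi.zero_apply, ENNReal.ofReal_eq_zero] at hξ ⊢
      have hw : (0:ℝ) < (1 + ξ ^ 2) ^ ((1:ℝ)/2) :=
        Real.rpow_pos_of_pos (RSAux.one_add_sq_pos ξ) _
      have h2 : ‖Fu ξ‖ ^ 2 ≤ 0 := by nlinarith [sq_nonneg ‖Fu ξ‖]
      have h3 : ‖Fu ξ‖ ≤ 0 := by nlinarith [norm_nonneg (Fu ξ)]
      exact norm_le_zero_iff.mp h3
    have hv0 : v = 0 := by
      funext x
      rw [hvdef]
      rw [Real.fourierInv_eq]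
      rw [show (0 : ℝ → ℂ) x = 0 from rfl]
      apply integral_eq_zero_of_ae
      filter_upwards [hFu0] with ξ hξ
      simp [hξ]
    apply hne
    refine hvu.symm.trans ?_
    rw [hv0]
  refine ⟨⟨v, hvc, hvu⟩, ?_⟩
  intro v' hv'c hv'u x
  have hv'v : v' = v := (hv'c.ae_eq_iff_eq (μ := (volume : Measure ℝ)) hvc).mp
    (hv'u.trans hvu.symm)
  rw [hv'v]
  -- set up the real quantities
  set A : ℝ := Real.sqrt (sobSq (1/2) Fu).toReal with hA
  set B : ℝ := Real.sqrt (sobSq s Fu).toReal with hB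
  have hA0 : 0 < A := Real.sqrt_pos.mpr (ENNReal.toReal_pos ha0 hane)
  have hb0 : sobSq s Fu ≠ 0 := fun h0 => ha0 (le_antisymm (h0 ▸ hab) zero_le)
  have hB0 : 0 < B := Real.sqrt_pos.mpr (ENNReal.toReal_pos hb0 hbne)
  have hAB : A ≤ B := Real.sqrt_le_sqrt (ENNReal.toReal_mono hbne hab)
  set T : ℝ := B / A with hT
  have hT1 : 1 ≤ T := (one_le_div hA0).mpr hAB
  have hT0 : 0 < T := lt_of_lt_of_le zero_lt_one hT1
  set R : ℝ := T ^ p with hRdef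
  have hR1 : 1 ≤ R := by
    rw [hRdef]
    calc (1:ℝ) = T ^ (0:ℝ) := (Real.rpow_zero T).symm
      _ ≤ T ^ p := Real.rpow_le_rpow_of_exponent_le hT1 hp0.le
  have hR0 : (0:ℝ) < R := lt_of_lt_of_le zero_lt_one hR1
  have hlogT2 : Real.log 2 ≤ Real.log (2 + T) :=
    Real.log_le_log two_pos (by linarith)
  have hlogTT : Real.log T ≤ Real.log (2 + T) :=
    Real.log_le_log hT0 (by linarith)
  have hlog2T0 : 0 < Real.log (2 + T) := lt_of_lt_of_le hlog2 hlogT2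
  -- main real bound
  have hM1 : Real.sqrt (2 + 2 * Real.log R) * A ≤
      Real.sqrt c1 * Real.sqrt (Real.log (2 + T)) * A := by
    apply mul_le_mul_of_nonneg_right _ hA0.le
    rw [← Real.sqrt_mul hc10.le]
    apply Real.sqrt_le_sqrt
    have hlogR : Real.log R = p * Real.log T := by
      rw [hRdef, Real.log_rpow hT0]
    have hexp : c1 * Real.log (2 + T) =
        2 / Real.log 2 * Real.log (2 + T) + 2 * p * Real.log (2 + T) := by
      rw [hc1]; ring
    have f1 : 2 / Real.log 2 * Real.log 2 = 2 := div_mul_cancel₀ 2 hlog2.ne'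
    have f2 : 2 / Real.log 2 * Real.log 2 ≤ 2 / Real.log 2 * Real.log (2 + T) :=
      mul_le_mul_of_nonneg_left hlogT2 (by positivity)
    have f3 : 2 * p * Real.log T ≤ 2 * p * Real.log (2 + T) :=
      mul_le_mul_of_nonneg_left hlogTT (by positivity)
    rw [hlogR, hexp]
    linarith
  have hM2 : Real.sqrt (2 * R ^ (1 - 2*s) / (2*s - 1)) * B ≤
      (Real.sqrt c2 / Real.sqrt (Real.log 2)) * Real.sqrt (Real.log (2 + T)) * A := by
    have hRT : R ^ (1 - 2*s) = T ^ (-2:ℝ) := by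
      rw [hRdef, ← Real.rpow_mul hT0.le]
      congr 1
      have hne' : s - 1/2 ≠ 0 := ne_of_gt hs2
      calc p * (1 - 2*s) = ((s - 1/2)⁻¹ * (s - 1/2)) * (-2) := by rw [hp]; ring
        _ = -2 := by rw [inv_mul_cancel₀ hne']; ring
    have hTinv : Real.sqrt (T ^ (-2:ℝ)) = T⁻¹ := by
      have : T ^ (-2:ℝ) = (T⁻¹) ^ 2 := by
        rw [← Real.rpow_natCast T⁻¹ 2, ← Real.rpow_neg_one T, ← Real.rpow_mul hT0.le]
        norm_num
      rw [this, Real.sqrt_sq (by positivity)]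
    have harg : 2 * R ^ (1 - 2*s) / (2*s - 1) = c2 * T ^ (-2:ℝ) := by
      rw [hRT, hc2]; ring
    rw [harg, Real.sqrt_mul hc20.le, hTinv]
    have hTB : T⁻¹ * B = A := by
      rw [hT, inv_div, div_mul_cancel₀ _ hB0.ne']
    rw [mul_assoc, hTB]
    have hsq : Real.sqrt c2 = Real.sqrt c2 / Real.sqrt (Real.log 2) * Real.sqrt (Real.log 2) := by
      rw [div_mul_cancel₀]
      exact (Real.sqrt_pos.mpr hlog2).ne'
    calc Real.sqrt c2 * A
        = Real.sqrt c2 / Real.sqrt (Real.log 2) * Real.sqrt (Real.log 2) * A := by rw [← hsq]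
      _ ≤ Real.sqrt c2 / Real.sqrt (Real.log 2) * Real.sqrt (Real.log (2 + T)) * A := by
          apply mul_le_mul_of_nonneg_right _ hA0.le
          apply mul_le_mul_of_nonneg_left (Real.sqrt_le_sqrt hlogT2) (by positivity)
  -- convert the ENNReal estimate to ℝ
  have hconv : ∫⁻ ξ, (‖Fu ξ‖₊ : ℝ≥0∞) ≤ ENNReal.ofReal
      (Real.sqrt (2 + 2 * Real.log R) * A + Real.sqrt (2 * R ^ (1 - 2*s) / (2*s - 1)) * B) := by
    refine le_trans (est R hR1) ?_
    have e1 : (ENNReal.ofReal (2 + 2 * Real.log R)) ^ (1/2:ℝ) * (sobSq (1/2) Fu) ^ (1/2:ℝ)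
        = ENNReal.ofReal (Real.sqrt (2 + 2 * Real.log R) * A) := by
      rw [RSAux.conv_ofReal_half (by nlinarith [Real.log_nonneg hR1]),
        RSAux.conv_rpow_half hane, ← ENNReal.ofReal_mul (Real.sqrt_nonneg _)]
    have e2 : (ENNReal.ofReal (2 * R ^ (1 - 2*s) / (2*s - 1))) ^ (1/2:ℝ) *
          (sobSq s Fu) ^ (1/2:ℝ)
        = ENNReal.ofReal (Real.sqrt (2 * R ^ (1 - 2*s) / (2*s - 1)) * B) := by
      rw [RSAux.conv_ofReal_half
          (div_nonneg (by positivity) (by linarith)),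
        RSAux.conv_rpow_half hbne, ← ENNReal.ofReal_mul (Real.sqrt_nonneg _)]
    rw [e1, e2, ← ENNReal.ofReal_add (by positivity) (by positivity)]
  have hnorm : ∫ ξ : ℝ, ‖Fu ξ‖ ≤ (Real.sqrt c1 + Real.sqrt c2 / Real.sqrt (Real.log 2)) * A *
      Real.sqrt (Real.log (2 + T)) := by
    rw [integral_norm_eq_lintegral_enorm hFm]
    apply le_trans (ENNReal.toReal_le_of_le_ofReal (by positivity) hconv)
    calc Real.sqrt (2 + 2 * Real.log R) * A + Real.sqrt (2 * R ^ (1 - 2*s) / (2*s - 1)) * B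
        ≤ Real.sqrt c1 * Real.sqrt (Real.log (2 + T)) * A +
          Real.sqrt c2 / Real.sqrt (Real.log 2) * Real.sqrt (Real.log (2 + T)) * A :=
          add_le_add hM1 hM2
      _ = (Real.sqrt c1 + Real.sqrt c2 / Real.sqrt (Real.log 2)) * A *
          Real.sqrt (Real.log (2 + T)) := by ring
  calc ‖v x‖ ≤ ∫ ξ : ℝ, ‖Fu ξ‖ := RSAux.norm_inv_ft_le Fu x
    _ ≤ (Real.sqrt c1 + Real.sqrt c2 / Real.sqrt (Real.log 2)) * A *
        Real.sqrt (Real.log (2 + T)) := hnorm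
    _ = (Real.sqrt c1 + Real.sqrt c2 / Real.sqrt (Real.log 2)) *
        Real.sqrt (sobSq (1 / 2) Fu).toReal *
        Real.sqrt (Real.log (2 + Real.sqrt (sobSq s Fu).toReal /
          Real.sqrt (sobSq (1 / 2) Fu).toReal)) := by rw [hA, hT, hB]
end
end

section
/- Almost-conserved quantity of the modulation ODE system: let c₁, c₃, c₄ ∈ ℝ and η ∈ ℝ with 1 + 2c₃η ≠ 0 and 2c₃η − 1 ≠ 0. Let J ⊆ ℝ be an interval and (λ, b, ν) : J → ℝ³ differentiable with λ(t) > 0 for all t ∈ J, satisfying λ' = −b, b' = −((1/2 + c₃η)b² + η + c₁b⁴ + c₄ν²)/λ, and ν' = −bν/λ on J. Then the function I(t) = λ(t)^{−(1+2c₃η)} · [ b(t)² + 2η/(1 + 2c₃η) + 2c₄ν(t)²/(2c₃η − 1) ] is differentiable on J with I'(t) = −2c₁ b(t)⁵ · λ(t)^{−(2+2c₃η)} for every t ∈ J. -/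
/-- **Almost-conserved quantity of the modulation ODE system.**  If `λ > 0`, `b`, `ν`
solve `λ' = −b`, `b' = −((1/2 + c₃η)b² + η + c₁b⁴ + c₄ν²)/λ`, `ν' = −bν/λ` on an
interval `J`, then
`I(t) = λ^{−(1+2c₃η)} [b² + 2η/(1+2c₃η) + 2c₄ν²/(2c₃η−1)]` satisfies
`I'(t) = −2c₁ b⁵ λ^{−(2+2c₃η)}` on `J`. -/
theorem modulation_almost_conserved
    (c₁ c₃ c₄ η : ℝ) (h₁ : 1 + 2 * c₃ * η ≠ 0) (h₂ : 2 * c₃ * η - 1 ≠ 0)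
    (J : Set ℝ) (hJ : J.OrdConnected)
    (lam b nu : ℝ → ℝ)
    (hpos : ∀ t ∈ J, 0 < lam t)
    (hlam : ∀ t ∈ J, HasDerivAt lam (-b t) t)
    (hb : ∀ t ∈ J, HasDerivAt b
      (-(((1 / 2 + c₃ * η) * b t ^ 2 + η + c₁ * b t ^ 4 + c₄ * nu t ^ 2) / lam t)) t)
    (hnu : ∀ t ∈ J, HasDerivAt nu (-(b t * nu t / lam t)) t) :
    ∀ t ∈ J,
      HasDerivAt (fun s => lam s ^ (-(1 + 2 * c₃ * η)) *
          (b s ^ 2 + 2 * η / (1 + 2 * c₃ * η) + 2 * c₄ * nu s ^ 2 / (2 * c₃ * η - 1)))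
        (-2 * c₁ * b t ^ 5 * lam t ^ (-(2 + 2 * c₃ * η))) t := by
  intro t ht
  have hl := hlam t ht
  have hb' := hb t ht
  have hn := hnu t ht
  have hlt := hpos t ht
  have hne : lam t ≠ 0 := hlt.ne'
  set c : ℝ := -(1 + 2 * c₃ * η) with hc
  have h1 : HasDerivAt (fun s => lam s ^ c)
      (-b t * c * lam t ^ (c - 1)) t := hl.rpow_const (Or.inl hne)
  have h2 : HasDerivAt
      (fun s => b s ^ 2 + 2 * η / (1 + 2 * c₃ * η) + 2 * c₄ * nu s ^ 2 / (2 * c₃ * η - 1))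
      (2 * b t ^ 1 * -(((1 / 2 + c₃ * η) * b t ^ 2 + η + c₁ * b t ^ 4 + c₄ * nu t ^ 2) / lam t)
        + 2 * c₄ * (2 * nu t ^ 1 * -(b t * nu t / lam t)) / (2 * c₃ * η - 1)) t := by
    exact ((hb'.pow 2).add_const _).add
      (((hn.pow 2).const_mul (2 * c₄)).div_const _)
  have key := h1.mul h2
  convert key using 1
  case e'_4 => rfl
  case e'_5 => rfl
  case e'_8 => rfl
  have hexp : lam t ^ (-(2 + 2 * c₃ * η)) = lam t ^ (c - 1) := by
    norm_num [hc]; ring_nf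
  have hsplit : lam t ^ c = lam t ^ (c - 1) * lam t := by
    rw [← Real.rpow_add_one hne]; ring_nf
  rw [hexp, hsplit]
  field_simp
  rw [hc]
  field_simp
  ring
end
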